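/- arXiv:2309.02669 — 2 statements merged into one kernel-verified Lean document; each statement's English description precedes it below -/
import Mathlib

section
/- Let S = {v_1,...,v_k} ⊂ ℝ^{m+1} be affinely independent, let x_{prev} ∈ conv(S) with barycentric coordinates α_{prev} (all nonnegative), and let x_t ∈ aff(S) \ conv(S) with barycentric coordinates α_t (some entry nonpositive). Define θ = min over indices i with α_{t,i} ≤ 0 of α_{prev,i}/(α_{prev,i} - α_{t,i}). Then θ ∈ [0,1] and the point θ x_t + (1-θ) x_{prev} lies in conv(S), with at least one barycentric coordinate equal to zero (it lies on a proper face of the simplex). -/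
/-!
Along the segment from `x_prev` to `x_t` the `i`-th barycentric coordinate is
`α_prev i - θ (α_prev i - α_t i)`. Coordinates with `α_t i > 0` stay nonnegative for all
`θ ∈ [0, 1]`; a coordinate with `α_t i ≤ 0` stays nonnegative exactly up to the ratio
`α_prev i / (α_prev i - α_t i)`, where it vanishes. Stopping at the smallest of these ratios
(the ratio test of the simplex method) keeps every coordinate nonnegative and zeroes the minimising one.
-/

open Finset

section RatioTest

variable {a b θ : ℝ}

lemma ratio_mem_Icc (ha : 0 ≤ a) (hb : b ≤ 0) (hab : 0 < a - b) : a / (a - b) ∈ Set.Icc 0 1 :=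
  ⟨div_nonneg ha hab.le, div_le_one_of_le₀ (by linarith) hab.le⟩

lemma combination_nonneg_of_le_ratio (hab : 0 < a - b) (hθ : θ ≤ a / (a - b)) :
    0 ≤ θ * b + (1 - θ) * a := by
  have : θ * (a - b) ≤ a := (le_div_iff₀ hab).mp hθ
  linarith

lemma combination_nonneg_of_mem_Icc (ha : 0 ≤ a) (hb : 0 ≤ b) (hθ : θ ∈ Set.Icc 0 1) :
    0 ≤ θ * b + (1 - θ) * a :=
  add_nonneg (mul_nonneg hθ.1 hb) (mul_nonneg (sub_nonneg.mpr hθ.2) ha)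

lemma combination_ratio_eq_zero (hab : a - b ≠ 0) :
    a / (a - b) * b + (1 - a / (a - b)) * a = 0 := by
  field_simp
  ring

variable {ι : Type*} {s : Finset ι} (hs : s.Nonempty) {α β : ι → ℝ}

lemma inf'_ratio_mem_Icc (hα : ∀ i ∈ s, 0 ≤ α i) (hβ : ∀ i ∈ s, β i ≤ 0)
    (hd : ∀ i ∈ s, 0 < α i - β i) : s.inf' hs (fun i => α i / (α i - β i)) ∈ Set.Icc 0 1 := by
  obtain ⟨j, hj, hmin⟩ := s.exists_mem_eq_inf' hs (fun i => α i / (α i - β i))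
  rw [hmin]
  exact ratio_mem_Icc (hα j hj) (hβ j hj) (hd j hj)

lemma exists_combination_inf'_ratio_eq_zero (hd : ∀ i ∈ s, 0 < α i - β i) :
    ∃ j, s.inf' hs (fun i => α i / (α i - β i)) * β j
      + (1 - s.inf' hs (fun i => α i / (α i - β i))) * α j = 0 := by
  obtain ⟨j, hj, hmin⟩ := s.exists_mem_eq_inf' hs (fun i => α i / (α i - β i))
  exact ⟨j, hmin ▸ combination_ratio_eq_zero (hd j hj).ne'⟩

end RatioTest

lemma smul_sum_smul_add_smul_sum_smul {ι R M : Type*} [Semiring R] [AddCommMonoid M] [Module R M]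
    (s : Finset ι) (a b : R) (f g : ι → R) (v : ι → M) :
    a • ∑ i ∈ s, f i • v i + b • ∑ i ∈ s, g i • v i = ∑ i ∈ s, (a * f i + b * g i) • v i := by
  simp only [smul_sum, smul_smul, ← sum_add_distrib, add_smul]

theorem stmt4_general {m k : ℕ} (v : Fin k → (Fin (m + 1) → ℝ))
    (αprev αt : Fin k → ℝ)
    (hprev_nonneg : ∀ i, 0 ≤ αprev i)
    (hprev_sum : ∑ i, αprev i = 1)
    (ht_sum : ∑ i, αt i = 1)
    (xprev xt : Fin (m + 1) → ℝ)
    (hxprev : xprev = ∑ i, αprev i • v i)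
    (hxt : xt = ∑ i, αt i • v i)
    (I : Finset (Fin k)) (hI : I = Finset.univ.filter (fun i => αt i ≤ 0))
    (hInonempty : I.Nonempty)
    (hdenom : ∀ i ∈ I, 0 < αprev i - αt i)
    (θ : ℝ) (hθ : θ = I.inf' hInonempty (fun i => αprev i / (αprev i - αt i))) :
    0 ≤ θ ∧ θ ≤ 1 ∧
    (∀ i, 0 ≤ θ * αt i + (1 - θ) * αprev i) ∧
    (∑ i, (θ * αt i + (1 - θ) * αprev i) = 1) ∧
    (θ • xt + (1 - θ) • xprev = ∑ i, (θ * αt i + (1 - θ) * αprev i) • v i) ∧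
    (θ • xt + (1 - θ) • xprev ∈ convexHull ℝ (Set.range v)) ∧
    (∃ j, θ * αt j + (1 - θ) * αprev j = 0) := by
  have hmemI : ∀ i, i ∈ I ↔ αt i ≤ 0 := by simp [hI]
  have hθIcc : θ ∈ Set.Icc 0 1 := hθ ▸ inf'_ratio_mem_Icc hInonempty
    (fun i _ => hprev_nonneg i) (fun i hi => (hmemI i).mp hi) hdenom
  have hcoord : ∀ i, 0 ≤ θ * αt i + (1 - θ) * αprev i := by
    intro i
    by_cases hi : i ∈ I
    · exact combination_nonneg_of_le_ratio (hdenom i hi) (hθ ▸ inf'_le _ hi)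
    · exact combination_nonneg_of_mem_Icc (hprev_nonneg i)
        (le_of_lt (not_le.mp ((hmemI i).not.mp hi))) hθIcc
  have hsum : ∑ i, (θ * αt i + (1 - θ) * αprev i) = 1 := by
    rw [sum_add_distrib, ← mul_sum, ← mul_sum, ht_sum, hprev_sum]
    ring
  have hvec : θ • xt + (1 - θ) • xprev = ∑ i, (θ * αt i + (1 - θ) * αprev i) • v i := by
    rw [hxt, hxprev, smul_sum_smul_add_smul_sum_smul]
  exact ⟨hθIcc.1, hθIcc.2, hcoord, hsum, hvec,
    mem_convexHull_of_exists_fintype _ v hcoord hsum Set.mem_range_self hvec.symm,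
    hθ ▸ exists_combination_inf'_ratio_eq_zero hInonempty hdenom⟩

/-- RemoveOneVertex step of AIM-mean: moving from an interior point x_prev of the
simplex towards an exterior point x_t of the affine hull, the step size
θ = min_{i : α_{t,i} ≤ 0} α_{prev,i}/(α_{prev,i} - α_{t,i}) lies in [0,1], the
intermediate point θ x_t + (1-θ) x_prev lies in the simplex, and at least one of
its barycentric coordinates vanishes (it lies on a proper face). -/
theorem stmt4 {m k : ℕ} (v : Fin k → (Fin (m + 1) → ℝ))
    (hv : AffineIndependent ℝ v)
    (αprev αt : Fin k → ℝ)
    (hprev_nonneg : ∀ i, 0 ≤ αprev i)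
    (hprev_sum : ∑ i, αprev i = 1)
    (ht_sum : ∑ i, αt i = 1)
    (xprev xt : Fin (m + 1) → ℝ)
    (hxprev : xprev = ∑ i, αprev i • v i)
    (hxt : xt = ∑ i, αt i • v i)
    (I : Finset (Fin k)) (hI : I = Finset.univ.filter (fun i => αt i ≤ 0))
    (hInonempty : I.Nonempty)
    (hdenom : ∀ i ∈ I, 0 < αprev i - αt i)
    (θ : ℝ) (hθ : θ = I.inf' hInonempty (fun i => αprev i / (αprev i - αt i))) :
    0 ≤ θ ∧ θ ≤ 1 ∧
    (∀ i, 0 ≤ θ * αt i + (1 - θ) * αprev i) ∧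
    (∑ i, (θ * αt i + (1 - θ) * αprev i) = 1) ∧
    (θ • xt + (1 - θ) • xprev = ∑ i, (θ * αt i + (1 - θ) * αprev i) • v i) ∧
    (θ • xt + (1 - θ) • xprev ∈ convexHull ℝ (Set.range v)) ∧
    (∃ j, θ * αt j + (1 - θ) * αprev j = 0) :=
  stmt4_general v αprev αt hprev_nonneg hprev_sum ht_sum xprev xt hxprev hxt I hI hInonempty hdenom
    θ hθ
end

section
/- There exists a constrained MDP with m-dimensional constraints such that every optimal mixed policy must randomize over at least m+1 deterministic policies. Concretely: with a single state and m+1 actions, where action 0 has reward 0 and cost 0 ∈ ℝ^m, and action i (1 ≤ i ≤ m) has reward 1 and cost e_i (the i-th unit vector), the episode terminating after one action, and constraint threshold τ = (1/(m+1))·𝟙, the unique distribution over actions maximizing expected reward subject to expected cost ≤ τ componentwise is the uniform distribution over all m+1 actions; in particular any optimal mixed policy has support of size m+1. -/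
/-! The reward is the mass outside action `0`, and each of the `m` capped actions carries at most
`1 / (m + 1)`, so the reward is at most `m / (m + 1)`. Equality forces every cap to be tight, and
the mass `1 - m / (m + 1)` left for action `0` is again `1 / (m + 1)`. -/

open Finset

section

variable {m : ℕ} {p : Fin (m + 1) → ℝ} {c : ℝ}

lemma Fin.card_univ_erase_zero : #(univ.erase (0 : Fin (m + 1))) = m := by
  rw [card_erase_of_mem (mem_univ 0), card_univ, Fintype.card_fin, Nat.add_sub_cancel]

lemma sum_univ_erase_zero_le (hp : ∀ i, i ≠ 0 → p i ≤ c) :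
    ∑ i ∈ univ.erase 0, p i ≤ m * c := by
  have h := sum_le_card_nsmul (univ.erase 0) p c fun i hi => hp i (ne_of_mem_erase hi)
  rwa [Fin.card_univ_erase_zero, nsmul_eq_mul] at h

lemma eq_of_sum_univ_erase_zero_eq (hp : ∀ i, i ≠ 0 → p i ≤ c)
    (hsum : ∑ i ∈ univ.erase 0, p i = m * c) (i : Fin (m + 1)) (hi : i ≠ 0) : p i = c := by
  have hle : ∀ j ∈ univ.erase 0, p j ≤ c := fun j hj => hp j (ne_of_mem_erase hj)
  have hsum' : ∑ j ∈ univ.erase 0, p j = ∑ _j ∈ univ.erase (0 : Fin (m + 1)), c := by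
    rw [hsum, sum_const, Fin.card_univ_erase_zero, nsmul_eq_mul]
  exact (sum_eq_sum_iff_of_le hle).mp hsum' i (mem_erase.mpr ⟨hi, mem_univ i⟩)

lemma eq_uniform_of_optimal (hsum : ∑ i, p i = 1) (hp : ∀ i, i ≠ 0 → p i ≤ 1 / (m + 1))
    (hopt : ∑ i ∈ univ.erase 0, p i = (m : ℝ) / (m + 1)) : p = fun _ => (1 : ℝ) / (m + 1) := by
  rw [← mul_one_div] at hopt
  have hpos := eq_of_sum_univ_erase_zero_eq hp hopt
  have hzero : p 0 = 1 / (m + 1) := by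
    have hsplit := add_sum_erase univ p (mem_univ 0)
    rw [hsum, hopt] at hsplit
    field_simp at hsplit ⊢
    linarith
  funext i
  by_cases hi : i = 0
  · rw [hi, hzero]
  · exact hpos i hi

end

open Finset in
/-- The CMDP of Theorem 2: a single state, m+1 actions where action 0 has reward
0 and cost 0 and action i (i ≥ 1) has reward 1 and cost e_i, with threshold
τ = 1/(m+1)·𝟙.  A distribution p over actions has expected reward ∑_{i≠0} p i
and the constraints read p i ≤ 1/(m+1) for i ≠ 0.  The optimal value m/(m+1) is
attained exactly by the uniform distribution, whose support has size m+1. -/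
theorem stmt8 (m : ℕ) :
    (∀ p : Fin (m + 1) → ℝ, (∀ i, 0 ≤ p i) → (∑ i, p i = 1) →
      (∀ i, i ≠ 0 → p i ≤ 1 / (m + 1)) →
      ∑ i ∈ Finset.univ.erase 0, p i ≤ (m : ℝ) / (m + 1)) ∧
    (∀ p : Fin (m + 1) → ℝ, (∀ i, 0 ≤ p i) → (∑ i, p i = 1) →
      (∀ i, i ≠ 0 → p i ≤ 1 / (m + 1)) →
      ∑ i ∈ Finset.univ.erase 0, p i = (m : ℝ) / (m + 1) →
      p = fun _ => (1 : ℝ) / (m + 1)) ∧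
    ((∀ i : Fin (m + 1), (0 : ℝ) ≤ 1 / (m + 1)) ∧
      (∑ _i : Fin (m + 1), (1 / (m + 1) : ℝ)) = 1 ∧
      (∑ _i ∈ (Finset.univ : Finset (Fin (m + 1))).erase 0, (1 / (m + 1) : ℝ))
        = (m : ℝ) / (m + 1)) ∧
    (∀ p : Fin (m + 1) → ℝ, p = (fun _ => (1 : ℝ) / (m + 1)) →
      (Finset.univ.filter (fun i => p i ≠ 0)).card = m + 1) := by
  refine ⟨fun p _ _ hp => ?_, fun p _ hsum hp hopt => eq_uniform_of_optimal hsum hp hopt,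
    ⟨fun _ => by positivity, ?_, ?_⟩, ?_⟩
  · rw [← mul_one_div]
    exact sum_univ_erase_zero_le hp
  · simp only [sum_const, card_univ, Fintype.card_fin, nsmul_eq_mul]
    field_simp
    push_cast
    ring
  · rw [sum_const, Fin.card_univ_erase_zero, nsmul_eq_mul, mul_one_div]
  · rintro p rfl
    have hsupport : univ.filter (fun _ : Fin (m + 1) => 1 / ((m : ℝ) + 1) ≠ 0) = univ :=
      filter_true_of_mem fun _ _ => by positivity
    rw [hsupport, card_univ, Fintype.card_fin]
end
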